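/- The interrobang function is strictly increasing on [0,1] ∩ ℚ: for all rational numbers x, y with 0 ≤ x < y ≤ 1, we have ‽(x) < ‽(y). -/

import Mathlib

/-- The defining functional equations of the interrobang function on `[0,1] ∩ ℚ`. -/
def InterrobangEq (f : ℚ → ℝ) : Prop :=
  f 0 = 0 ∧
  (∀ x : ℚ, 0 < x → x ≤ 1/2 →
    f x = (4 : ℝ) ^ (-⌊(1/x : ℚ)⌋) * (1 - 2 * f (Int.fract (1/x)))) ∧
  (∀ x : ℚ, 1/2 < x → x ≤ 1 →
    f x = 3/8 - 3/4 * f (1/x - 1) - 1/2 * f (1 - x))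

/-!
Induct on the largest denominator. For `0 < x < 1` the points `Int.fract (1/x)` and `1/x - 1`
have smaller denominator than `x`; for `x > 1/2` the point `1 - x` has the same denominator but
lies in `[0, 1/2)`, where the first functional equation applies. On `(0, 1/2]` that equation
traps `f x` in `(4^(-(m+1)), 4^(-m)]` with `m = ⌊1/x⌋ ≥ 2`, as soon as `f` maps `[0, 1)` into
`[0, 3/8)` at smaller denominators. These intervals order the values across different `m`, and
they put `f` below `1/16` on `[0, 1/2]` and above `1/16` on `(1/2, 1]`.
-/

open Set

theorem Rat.den_one_div_sub_intCast_lt {q : ℚ} (h0 : 0 < q) (h1 : q < 1) (k : ℤ) :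
    (1 / q - k).den < q.den := by
  rw [sub_intCast_den, one_div, den_inv_of_ne_zero h0.ne']
  have hnum := num_lt_denom_iff.mpr h1
  have hpos := num_pos.mpr h0
  omega

def fareySet (n : ℕ) : Set ℚ := {x | x ∈ Icc 0 1 ∧ x.den ≤ n}

section FareySet

variable {n : ℕ} {x : ℚ}

theorem mem_fareySet_den (hx : x ∈ Icc 0 1) : x ∈ fareySet x.den := ⟨hx, le_rfl⟩

theorem fareySet_zero : fareySet 0 = ∅ :=
  eq_empty_of_forall_notMem fun x hx => x.pos.ne' (Nat.le_zero.mp hx.2)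

theorem zero_mem_fareySet_of_mem (hx : x ∈ fareySet n) : (0 : ℚ) ∈ fareySet n :=
  ⟨left_mem_Icc.mpr zero_le_one, x.pos.trans_le hx.2⟩

theorem one_mem_fareySet_of_mem (hx : x ∈ fareySet n) : (1 : ℚ) ∈ fareySet n :=
  ⟨right_mem_Icc.mpr zero_le_one, x.pos.trans_le hx.2⟩

theorem one_sub_mem_fareySet (hx : x ∈ fareySet n) : 1 - x ∈ fareySet n := by
  have hden : (1 - x).den = x.den := by exact_mod_cast Rat.intCast_sub_den 1 x
  exact ⟨⟨sub_nonneg.mpr hx.1.2, sub_le_self 1 hx.1.1⟩, hden ▸ hx.2⟩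

theorem fract_one_div_mem_fareySet (hx : x ∈ fareySet (n + 1)) (h0 : 0 < x) (h1 : x < 1) :
    Int.fract (1 / x) ∈ fareySet n := by
  have hden := Rat.den_one_div_sub_intCast_lt h0 h1 ⌊1 / x⌋
  rw [Int.self_sub_floor] at hden
  have hxn := hx.2
  exact ⟨⟨Int.fract_nonneg _, (Int.fract_lt_one _).le⟩, by omega⟩

theorem one_div_sub_one_mem_fareySet (hx : x ∈ fareySet (n + 1)) (h0 : 1 / 2 ≤ x) (h1 : x < 1) :
    1 / x - 1 ∈ fareySet n := by
  have hx0 : 0 < x := by linarith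
  have hden := Rat.den_one_div_sub_intCast_lt hx0 h1 1
  rw [Int.cast_one] at hden
  have hlo : 1 ≤ 1 / x := by rw [le_div_iff₀ hx0]; linarith
  have hhi : 1 / x ≤ 2 := by rw [div_le_iff₀ hx0]; linarith
  have hxn := hx.2
  exact ⟨⟨by linarith, by linarith⟩, by omega⟩

end FareySet

namespace InterrobangEq

variable {f : ℚ → ℝ} {n : ℕ} {x y : ℚ}

theorem map_zero (hf : InterrobangEq f) : f 0 = 0 := hf.1

theorem map_one (hf : InterrobangEq f) : f 1 = 3 / 8 := by
  have h := hf.2.2 1 (by norm_num) le_rfl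
  norm_num [hf.map_zero] at h
  exact h

theorem nonneg_of_strictMonoOn (hf : InterrobangEq f) (hmono : StrictMonoOn f (fareySet n))
    (hx : x ∈ fareySet n) : 0 ≤ f x := by
  rcases hx.1.1.eq_or_lt with rfl | hx0
  · exact hf.map_zero.ge
  · exact hf.map_zero ▸ (hmono (zero_mem_fareySet_of_mem hx) hx hx0).le

theorem lt_three_eighths_of_strictMonoOn (hf : InterrobangEq f)
    (hmono : StrictMonoOn f (fareySet n)) (hx : x ∈ fareySet n) (hx1 : x < 1) : f x < 3 / 8 :=
  hf.map_one ▸ hmono hx (one_mem_fareySet_of_mem hx) hx1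

/-- The factor `1 - 2 f (Int.fract (1/x))` lies in `(1/4, 1]`. -/
theorem mem_Ioc_zpow_of_le_half (hf : InterrobangEq f) (hx0 : 0 < x) (hx : x ≤ 1 / 2)
    (hfract0 : 0 ≤ f (Int.fract (1 / x))) (hfract : f (Int.fract (1 / x)) < 3 / 8) :
    f x ∈ Ioc ((4 : ℝ) ^ (-(⌊1 / x⌋ + 1))) ((4 : ℝ) ^ (-⌊1 / x⌋)) := by
  have hpos : (0 : ℝ) < 4 ^ (-⌊1 / x⌋) := zpow_pos (by norm_num) _
  have hsucc : (4 : ℝ) ^ (-(⌊1 / x⌋ + 1)) = 4 ^ (-⌊1 / x⌋) * (1 / 4) := by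
    rw [neg_add, zpow_add₀ (by norm_num)]
    norm_num
  rw [hf.2.1 x hx0 hx, hsucc]
  exact ⟨mul_lt_mul_of_pos_left (by linarith) hpos,
    mul_le_of_le_one_right hpos.le (by linarith)⟩

theorem mem_Ioc_zpow_of_strictMonoOn (hf : InterrobangEq f) (hmono : StrictMonoOn f (fareySet n))
    (hx : x ∈ fareySet (n + 1)) (hx0 : 0 < x) (hx2 : x ≤ 1 / 2) :
    f x ∈ Ioc ((4 : ℝ) ^ (-(⌊1 / x⌋ + 1))) ((4 : ℝ) ^ (-⌊1 / x⌋)) := by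
  have hfract := fract_one_div_mem_fareySet hx hx0 (by linarith)
  exact hf.mem_Ioc_zpow_of_le_half hx0 hx2 (hf.nonneg_of_strictMonoOn hmono hfract)
    (hf.lt_three_eighths_of_strictMonoOn hmono hfract (Int.fract_lt_one _))

theorem le_one_sixteenth (hf : InterrobangEq f) (hmono : StrictMonoOn f (fareySet n))
    (hx : x ∈ fareySet (n + 1)) (hx2 : x ≤ 1 / 2) : f x ≤ 1 / 16 := by
  rcases hx.1.1.eq_or_lt with rfl | hx0
  · rw [hf.map_zero]; norm_num
  have hfloor : 2 ≤ ⌊1 / x⌋ := by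
    rw [Int.le_floor, le_div_iff₀ hx0]
    push_cast
    linarith
  calc f x ≤ (4 : ℝ) ^ (-⌊1 / x⌋) := (hf.mem_Ioc_zpow_of_strictMonoOn hmono hx hx0 hx2).2
    _ ≤ (4 : ℝ) ^ (-2 : ℤ) := zpow_le_zpow_right₀ (by norm_num) (by omega)
    _ = 1 / 16 := by norm_num

theorem one_sixteenth_lt (hf : InterrobangEq f) (hmono : StrictMonoOn f (fareySet n))
    (hy : y ∈ fareySet (n + 1)) (hy2 : 1 / 2 < y) : 1 / 16 < f y := by
  have hinv : f (1 / y - 1) < 3 / 8 := by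
    rcases hy.1.2.eq_or_lt with rfl | hy1
    · norm_num [hf.map_zero]
    · have hmem := one_div_sub_one_mem_fareySet hy hy2.le hy1
      refine hf.lt_three_eighths_of_strictMonoOn hmono hmem ?_
      have : 1 / y < 2 := by rw [div_lt_iff₀ (by linarith)]; linarith
      linarith
  have hsub : f (1 - y) ≤ 1 / 16 :=
    hf.le_one_sixteenth hmono (one_sub_mem_fareySet hy) (by linarith)
  rw [hf.2.2 y hy2 hy.1.2]
  linarith

theorem strictMonoOn_fareySet_succ_inter_Iic_half (hf : InterrobangEq f)
    (hmono : StrictMonoOn f (fareySet n)) :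
    StrictMonoOn f (fareySet (n + 1) ∩ Iic (1 / 2)) := by
  rintro a ⟨ha, ha2 : a ≤ 1 / 2⟩ b ⟨hb, hb2 : b ≤ 1 / 2⟩ hab
  have hb0 : 0 < b := ha.1.1.trans_lt hab
  have hfb := hf.mem_Ioc_zpow_of_strictMonoOn hmono hb hb0 hb2
  rcases ha.1.1.eq_or_lt with rfl | ha0
  · exact hf.map_zero ▸ (zpow_pos (by norm_num) _).trans hfb.1
  have hfa := hf.mem_Ioc_zpow_of_strictMonoOn hmono ha ha0 ha2
  have hinv : 1 / b < 1 / a := one_div_lt_one_div_of_lt ha0 hab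
  rcases (Int.floor_le_floor hinv.le).eq_or_lt with hfloor | hfloor
  · have hfract : Int.fract (1 / b) < Int.fract (1 / a) := by
      rw [← Int.self_sub_floor, ← Int.self_sub_floor, hfloor]
      exact sub_lt_sub_right hinv _
    have hf_fract := hmono (fract_one_div_mem_fareySet hb hb0 (by linarith))
      (fract_one_div_mem_fareySet ha ha0 (by linarith)) hfract
    rw [hf.2.1 a ha0 ha2, hf.2.1 b hb0 hb2, hfloor]
    exact mul_lt_mul_of_pos_left (by linarith) (zpow_pos (by norm_num) _)
  · calc f a ≤ (4 : ℝ) ^ (-⌊1 / a⌋) := hfa.2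
      _ ≤ (4 : ℝ) ^ (-(⌊1 / b⌋ + 1)) := zpow_le_zpow_right₀ (by norm_num) (by omega)
      _ < f b := hfb.1

theorem strictMonoOn_fareySet_succ (hf : InterrobangEq f) (hmono : StrictMonoOn f (fareySet n)) :
    StrictMonoOn f (fareySet (n + 1)) := by
  intro x hx y hy hxy
  have hhalf := hf.strictMonoOn_fareySet_succ_inter_Iic_half hmono
  rcases le_or_gt y (1 / 2) with hy2 | hy2
  · exact hhalf ⟨hx, hxy.le.trans hy2⟩ ⟨hy, hy2⟩ hxy
  rcases le_or_gt x (1 / 2) with hx2 | hx2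
  · exact (hf.le_one_sixteenth hmono hx hx2).trans_lt (hf.one_sixteenth_lt hmono hy hy2)
  have hx1 : x < 1 := hxy.trans_le hy.1.2
  have hmem_x := one_div_sub_one_mem_fareySet hx hx2.le hx1
  have hinv : f (1 / y - 1) < f (1 / x - 1) := by
    rcases hy.1.2.eq_or_lt with rfl | hy1
    · have hpos : 0 < 1 / x - 1 := by
        have : 1 < 1 / x := by rw [lt_div_iff₀ (by linarith)]; linarith
        linarith
      simpa using hmono (zero_mem_fareySet_of_mem hmem_x) hmem_x hpos
    · exact hmono (one_div_sub_one_mem_fareySet hy hy2.le hy1) hmem_x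
        (by linarith [one_div_lt_one_div_of_lt (by linarith) hxy])
  have hsub : f (1 - y) < f (1 - x) :=
    hhalf ⟨one_sub_mem_fareySet hy, mem_Iic.mpr (by linarith)⟩
      ⟨one_sub_mem_fareySet hx, mem_Iic.mpr (by linarith)⟩
      (by linarith)
  rw [hf.2.2 x hx2 hx1.le, hf.2.2 y hy2 hy.1.2]
  linarith

theorem strictMonoOn_fareySet (hf : InterrobangEq f) (n : ℕ) : StrictMonoOn f (fareySet n) := by
  induction n with
  | zero => exact fareySet_zero ▸ subsingleton_empty.strictMonoOn f
  | succ n ih => exact hf.strictMonoOn_fareySet_succ ih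

theorem strictMonoOn_Icc (hf : InterrobangEq f) : StrictMonoOn f (Icc 0 1) :=
  fun x hx y hy hxy =>
    hf.strictMonoOn_fareySet (max x.den y.den) ⟨hx, le_max_left _ _⟩ ⟨hy, le_max_right _ _⟩
      hxy

end InterrobangEq

theorem interrobang_strictMono (f : ℚ → ℝ) (hf : InterrobangEq f) :
    ∀ x y : ℚ, 0 ≤ x → x < y → y ≤ 1 → f x < f y :=
  fun _ _ hx hxy hy => hf.strictMonoOn_Icc ⟨hx, hxy.le.trans hy⟩ ⟨hx.trans hxy.le, hy⟩ hxy
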